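/- Let G be a finite group, L a cocommutative Hopf algebra over a field k which is a left kG-module algebra, and H = L ⋊ kG the smash product Hopf algebra. Suppose given a left partial action of H on a k-algebra A, and let γ: G × G → kˣ be a normalized 2-cocycle (γ(x,y)γ(xy,z) = γ(x,yz)γ(y,z) and γ(g,1) = γ(1,g) = 1). Define ω: H ⊗ H → A on elements h = l ⊗ g, m = l' ⊗ s by ω(h, m) = γ(g,s)(h·(m·1_A)). Then (·, ω) is a twisted partial action of H on A satisfying additionally ω(h,1_H) = ω(1_H,h) = h·1_A and the cocycle identity Σ(h₍₁₎·ω(l₍₁₎,m₍₁₎))ω(h₍₂₎,l₍₂₎m₍₂₎) = Σω(h₍₁₎,l₍₁₎)ω(h₍₂₎l₍₂₎,m). -/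

import Mathlib

/-!
Work in the convolution algebra of linear maps `H ⊗ H → A` and write `T a (h ⊗ l) = h · (l · a)`,
`M a (h ⊗ l) = (h l) · a`. Multiplicativity of the partial action says that `h ↦ (h · -)` turns
convolution on `H` into products, which gives `T a = T a ⋆ T 1`; combined with the partial-action
axiom `T a = T' ⋆ M a` (where `T' (h ⊗ l) = ε(l) (h · 1)`) and associativity of convolution it
gives `T a = T 1 ⋆ M a`.

On the piece `(L ⊗ g) ⊗ (L ⊗ s)` of `H ⊗ H` the twist `ω` is `γ(g, s) • T 1`. Because `Δ` maps
`L ⊗ g` into `(L ⊗ g) ⊗ (L ⊗ g)`, restriction to that piece is multiplicative for convolution, so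
the scalar can be pulled out of every product: both sides of the twisted-action identities become
`γ(g, s) • T a` there. Likewise both sides of the cocycle identity become multiples of
`h · (l · (m · 1))` on the piece of degree `(g, s, t)`, with scalars `γ(s, t) γ(g, st)` and
`γ(g, s) γ(gs, t)`, which agree by the cocycle condition.
-/

open TensorProduct Coalgebra WithConv

namespace Coalgebra.Repr

variable {R C D A : Type*} [CommSemiring R] [Semiring C] [Bialgebra R C] [Semiring D]
  [Bialgebra R D] [Semiring A] [Algebra R A] {ι κ : Type*} {c : C} {d : D}

lemma convMul_tmul_apply (𝓡 : Repr R c ι) (𝓢 : Repr R d κ) (f g : WithConv (C ⊗[R] D →ₗ[R] A)) :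
    (f * g) (c ⊗ₜ d) = ∑ i ∈ 𝓡.index, ∑ j ∈ 𝓢.index,
      f (𝓡.left i ⊗ₜ 𝓢.left j) * g (𝓡.right i ⊗ₜ 𝓢.right j) := by
  rw [(𝓡.tmul 𝓢).convMul_apply, tmul_index, Finset.sum_product]
  rfl

end Coalgebra.Repr

lemma LinearMap.comul_comp_map {R C D C' D' : Type*} [CommSemiring R]
    [AddCommMonoid C] [Module R C] [CoalgebraStruct R C]
    [AddCommMonoid D] [Module R D] [CoalgebraStruct R D]
    [AddCommMonoid C'] [Module R C'] [CoalgebraStruct R C']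
    [AddCommMonoid D'] [Module R D'] [CoalgebraStruct R D'] {φ : D →ₗ[R] C} {ψ : D' →ₗ[R] C'}
    (hφ : comul ∘ₗ φ = map φ φ ∘ₗ comul) (hψ : comul ∘ₗ ψ = map ψ ψ ∘ₗ comul) :
    comul ∘ₗ map φ ψ = map (map φ ψ) (map φ ψ) ∘ₗ comul := by
  ext x y
  have hx := congr($hφ x)
  have hy := congr($hψ y)
  simp only [comp_apply] at hx hy
  simp only [AlgebraTensorModule.curry_apply, curry_apply, LinearMap.coe_restrictScalars,
    comp_apply, map_tmul, TensorProduct.comul_tmul, hx, hy]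
  induction comul (R := R) x using TensorProduct.induction_on with
  | zero => simp
  | add => simp_all [add_tmul]
  | tmul =>
    induction comul (R := R) y using TensorProduct.induction_on with
    | zero => simp
    | add => simp_all [tmul_add]
    | tmul => simp

namespace WithConv

variable {R A C D : Type*} [CommSemiring R] [AddCommMonoid C] [Module R C]
  [AddCommMonoid D] [Module R D]

def precomp [AddCommMonoid A] [Module R A] (φ : D →ₗ[R] C) (f : WithConv (C →ₗ[R] A)) :
    WithConv (D →ₗ[R] A) :=
  toConv (f.ofConv ∘ₗ φ)

@[simp] lemma precomp_apply [AddCommMonoid A] [Module R A] (φ : D →ₗ[R] C)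
    (f : WithConv (C →ₗ[R] A)) (x : D) : precomp φ f x = f (φ x) := rfl

lemma precomp_mul [Semiring A] [Algebra R A] [CoalgebraStruct R C] [CoalgebraStruct R D]
    {φ : D →ₗ[R] C} (hφ : comul ∘ₗ φ = map φ φ ∘ₗ comul) (f g : WithConv (C →ₗ[R] A)) :
    precomp φ (f * g) = precomp φ f * precomp φ g := by
  simp [precomp, LinearMap.convMul_def, map_comp, LinearMap.comp_assoc, hφ]

variable {M N : Type*} [AddCommMonoid M] [Module R M] [AddCommMonoid N] [Module R N]
  [AddCommMonoid A] [Module R A] {G : Type*} {j : G → N →ₗ[R] M}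

lemma ext_of_precomp_map (hspan : Submodule.span R {x | ∃ g n, j g n = x} = ⊤)
    {f f' : WithConv (M ⊗[R] M →ₗ[R] A)}
    (h : ∀ g s, precomp (map (j g) (j s)) f = precomp (map (j g) (j s)) f') : f = f' :=
  WithConv.ext <| TensorProduct.ext <| LinearMap.ext_on hspan <| by
    rintro _ ⟨g, x, rfl⟩
    refine LinearMap.ext_on hspan ?_
    rintro _ ⟨s, y, rfl⟩
    exact congr($(h g s) (x ⊗ₜ y))

lemma ext_of_precomp_map₃ (hspan : Submodule.span R {x | ∃ g n, j g n = x} = ⊤)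
    {f f' : WithConv (M ⊗[R] (M ⊗[R] M) →ₗ[R] A)}
    (h : ∀ g s t, precomp (map (j g) (map (j s) (j t))) f =
      precomp (map (j g) (map (j s) (j t))) f') : f = f' :=
  WithConv.ext <| TensorProduct.ext <| LinearMap.ext_on hspan <| by
    rintro _ ⟨g, x, rfl⟩
    refine congr_arg ofConv (ext_of_precomp_map (f := toConv _) (f' := toConv _) hspan
      fun s t => WithConv.ext <| TensorProduct.ext' fun y z => ?_)
    exact congr($(h g s t) (x ⊗ₜ (y ⊗ₜ z)))

end WithConv

section ThreefoldMaps

variable {k H A : Type*} [CommSemiring k] [Semiring H] [Bialgebra k H] [Semiring A] [Algebra k A]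

def liftTensorMul (B : H →ₗ[k] H →ₗ[k] A) : WithConv (H ⊗[k] (H ⊗[k] H) →ₗ[k] A) :=
  toConv (lift B ∘ₗ (LinearMap.mul' k H).lTensor H)

@[simp] lemma liftTensorMul_tmul (B : H →ₗ[k] H →ₗ[k] A) (h l m : H) :
    liftTensorMul B (h ⊗ₜ (l ⊗ₜ m)) = B h (l * m) := rfl

def liftMulTensor (B : H →ₗ[k] H →ₗ[k] A) : WithConv (H ⊗[k] (H ⊗[k] H) →ₗ[k] A) :=
  toConv (lift B ∘ₗ (LinearMap.mul' k H).rTensor H ∘ₗ (TensorProduct.assoc k H H H).symm)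

@[simp] lemma liftMulTensor_tmul (B : H →ₗ[k] H →ₗ[k] A) (h l m : H) :
    liftMulTensor B (h ⊗ₜ (l ⊗ₜ m)) = B (h * l) m := rfl

/-- Sums `Σ B(h₁, l₁) D(h₂ l₂, m)` that do not split `m` become convolution products on
`H ⊗ H ⊗ H` once `m` is written as `Σ ε(m₁) m₂`. -/
def liftTensorCounit (B : H →ₗ[k] H →ₗ[k] A) : WithConv (H ⊗[k] (H ⊗[k] H) →ₗ[k] A) :=
  toConv (TensorProduct.rid k A ∘ₗ map (lift B) counit ∘ₗ
    (TensorProduct.assoc k H H H).symm.toLinearMap)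

@[simp] lemma liftTensorCounit_tmul (B : H →ₗ[k] H →ₗ[k] A) (h l m : H) :
    liftTensorCounit B (h ⊗ₜ (l ⊗ₜ m)) = counit (R := k) m • B h l := rfl

lemma liftTensorCounit_mul_liftMulTensor_tmul (B D : H →ₗ[k] H →ₗ[k] A) {h l : H} {ι κ : Type*}
    (𝓡 : Repr k h ι) (𝓢 : Repr k l κ) (m : H) :
    (liftTensorCounit B * liftMulTensor D) (h ⊗ₜ (l ⊗ₜ m)) =
      ∑ i ∈ 𝓡.index, ∑ j ∈ 𝓢.index, B (𝓡.left i) (𝓢.left j) * D (𝓡.right i * 𝓢.right j) m := by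
  rw [𝓡.convMul_tmul_apply (𝓢.tmul (ℛ k m))]
  simp only [Repr.tmul_index, Finset.sum_product, Repr.tmul_left, Repr.tmul_right,
    liftTensorCounit_tmul, liftMulTensor_tmul]
  refine Finset.sum_congr rfl fun i _ => Finset.sum_congr rfl fun j _ => ?_
  conv_rhs => rw [← sum_counit_smul (ℛ k m)]
  simp [Finset.mul_sum]

end ThreefoldMaps

section PartialAction

variable {k H A : Type*} [CommSemiring k] [Semiring H] [Bialgebra k H] [Semiring A] [Algebra k A]
  (act : H →ₗ[k] A →ₗ[k] A)

def actTensor {C : Type*} [AddCommMonoid C] [Module k C] (F : WithConv (C →ₗ[k] A)) :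
    WithConv (H ⊗[k] C →ₗ[k] A) :=
  toConv (lift (act.compl₂ F.ofConv))

@[simp] lemma actTensor_tmul {C : Type*} [AddCommMonoid C] [Module k C]
    (F : WithConv (C →ₗ[k] A)) (h : H) (c : C) :
    actTensor act F (h ⊗ₜ c) = act h (F c) := rfl

def iterAct (a : A) : WithConv (H ⊗[k] H →ₗ[k] A) := actTensor act (toConv (act.flip a))

@[simp] lemma iterAct_tmul (a : A) (h l : H) : iterAct act a (h ⊗ₜ l) = act h (act l a) := rfl

def mulAct (a : A) : WithConv (H ⊗[k] H →ₗ[k] A) := toConv (act.flip a ∘ₗ LinearMap.mul' k H)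

@[simp] lemma mulAct_tmul (a : A) (h l : H) : mulAct act a (h ⊗ₜ l) = act (h * l) a := rfl

def ActsMultiplicatively : Prop :=
  ∀ a b : A, toConv (act.flip (a * b)) = toConv (act.flip a) * toConv (act.flip b)

/-- The axiom `h · (l · a) = Σ (h₁ · 1) (h₂ l · a)`, with `l` split as `Σ ε(l₁) l₂`. -/
def ActsPartially : Prop :=
  ∀ a : A, iterAct act a = actTensor act 1 * mulAct act a

variable {act}

lemma act_mul_eq_sum (hmul : ActsMultiplicatively act) {h : H} {ι : Type*} (𝓡 : Repr k h ι)
    (a b : A) : act h (a * b) = ∑ i ∈ 𝓡.index, act (𝓡.left i) a * act (𝓡.right i) b :=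
  calc act h (a * b) = (toConv (act.flip a) * toConv (act.flip b)) h := by rw [← hmul]; rfl
    _ = _ := 𝓡.convMul_apply _ _

lemma actTensor_mul (hmul : ActsMultiplicatively act) {C : Type*} [Semiring C] [Bialgebra k C]
    (F G : WithConv (C →ₗ[k] A)) :
    actTensor act (F * G) = actTensor act F * actTensor act G := by
  refine WithConv.ext (TensorProduct.ext' fun h c => ?_)
  rw [(ℛ k h).convMul_tmul_apply (ℛ k c), Finset.sum_comm, actTensor_tmul,
    (ℛ k c).convMul_apply, map_sum]
  simp only [actTensor_tmul, act_mul_eq_sum hmul (ℛ k h)]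

lemma iterAct_eq_iterAct_mul_iterAct_one (hmul : ActsMultiplicatively act) (a : A) :
    iterAct act a = iterAct act a * iterAct act 1 := by
  rw [iterAct, iterAct, ← actTensor_mul hmul, ← hmul, mul_one]

lemma iterAct_eq_iterAct_one_mul_mulAct (hmul : ActsMultiplicatively act)
    (hpartial : ActsPartially act) (a : A) :
    iterAct act a = iterAct act 1 * mulAct act a :=
  calc iterAct act a = iterAct act 1 * iterAct act a := by
        rw [iterAct, iterAct, ← actTensor_mul hmul, ← hmul, one_mul]
    _ = iterAct act 1 * actTensor act 1 * mulAct act a := by rw [hpartial a, mul_assoc]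
    _ = iterAct act 1 * mulAct act a := by rw [iterAct, ← actTensor_mul hmul, mul_one]

lemma actTensor_one_mul_mulAct_tmul {h : H} {ι : Type*} (𝓡 : Repr k h ι) (l : H) (a : A) :
    (actTensor act (1 : WithConv (H →ₗ[k] A)) * mulAct act a) (h ⊗ₜ l) =
      ∑ i ∈ 𝓡.index, act (𝓡.left i) 1 * act (𝓡.right i * l) a := by
  rw [𝓡.convMul_tmul_apply (ℛ k l)]
  refine Finset.sum_congr rfl fun i _ => ?_
  conv_rhs => rw [← sum_counit_smul (ℛ k l)]
  simp [Finset.mul_sum, Algebra.algebraMap_eq_smul_one]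

lemma liftTensorCounit_mul_liftMulTensor_eq (hmul : ActsMultiplicatively act)
    (hpartial : ActsPartially act) :
    liftTensorCounit (act.compl₂ (act.flip 1)) * liftMulTensor (act.compl₂ (act.flip 1)) =
      actTensor act (iterAct act 1) :=
  WithConv.ext <| TensorProduct.ext_threefold' fun h l m => by
    rw [liftTensorCounit_mul_liftMulTensor_tmul _ _ (ℛ k h) (ℛ k l), actTensor_tmul,
      iterAct_tmul, ← iterAct_tmul act (act m 1) h l,
      iterAct_eq_iterAct_one_mul_mulAct hmul hpartial, (ℛ k h).convMul_tmul_apply (ℛ k l)]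
    rfl

end PartialAction

section GroupTwist

variable {k H A G L : Type*} [CommSemiring k] [Semiring H] [Bialgebra k H] [Semiring A]
  [Algebra k A] [AddCommMonoid L] [Module k L]
  {act : H →ₗ[k] A →ₗ[k] A} {W : H →ₗ[k] H →ₗ[k] A} {j : G → L →ₗ[k] H} {γ : G → G → k}

lemma precomp_map_lift
    (hW : ∀ g s x y, W (j g x) (j s y) = γ g s • act (j g x) (act (j s y) 1)) (g s : G) :
    precomp (map (j g) (j s)) (toConv (lift W)) =
      γ g s • precomp (map (j g) (j s)) (iterAct act 1) :=
  WithConv.ext <| TensorProduct.ext' fun x y => hW g s x y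

lemma iterAct_mul_lift_eq_lift_mul_mulAct [CoalgebraStruct k L]
    (hmul : ActsMultiplicatively act) (hpartial : ActsPartially act)
    (hspan : Submodule.span k {x | ∃ g l, j g l = x} = ⊤)
    (hj : ∀ g, comul ∘ₗ j g = map (j g) (j g) ∘ₗ comul)
    (hW : ∀ g s x y, W (j g x) (j s y) = γ g s • act (j g x) (act (j s y) 1)) (a : A) :
    iterAct act a * toConv (lift W) = toConv (lift W) * mulAct act a := by
  refine WithConv.ext_of_precomp_map hspan fun g s => ?_
  have hJ := LinearMap.comul_comp_map (hj g) (hj s)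
  rw [precomp_mul hJ, precomp_mul hJ, precomp_map_lift hW, mul_smul_comm, smul_mul_assoc,
    ← precomp_mul hJ, ← precomp_mul hJ, ← iterAct_eq_iterAct_mul_iterAct_one hmul,
    ← iterAct_eq_iterAct_one_mul_mulAct hmul hpartial]

lemma lift_eq_lift_mul_mulAct_one [CoalgebraStruct k L]
    (hmul : ActsMultiplicatively act) (hpartial : ActsPartially act)
    (hspan : Submodule.span k {x | ∃ g l, j g l = x} = ⊤)
    (hj : ∀ g, comul ∘ₗ j g = map (j g) (j g) ∘ₗ comul)
    (hW : ∀ g s x y, W (j g x) (j s y) = γ g s • act (j g x) (act (j s y) 1)) :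
    toConv (lift W) = toConv (lift W) * mulAct act 1 := by
  refine WithConv.ext_of_precomp_map hspan fun g s => ?_
  have hJ := LinearMap.comul_comp_map (hj g) (hj s)
  rw [precomp_mul hJ, precomp_map_lift hW, smul_mul_assoc, ← precomp_mul hJ,
    ← iterAct_eq_iterAct_one_mul_mulAct hmul hpartial]

lemma flip_one_eq_act_flip_one [One G] (hact_one : ∀ a, act 1 a = a)
    (hspan : Submodule.span k {x | ∃ g l, j g l = x} = ⊤) (hj_one : (1 : H) ∈ LinearMap.range (j 1))
    (hW : ∀ g s x y, W (j g x) (j s y) = γ g s • act (j g x) (act (j s y) 1))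
    (hγ : ∀ g, γ g 1 = 1) : W.flip 1 = act.flip 1 :=
  LinearMap.ext_on hspan <| by
    rintro _ ⟨g, x, rfl⟩
    obtain ⟨e, he⟩ := hj_one
    simp only [LinearMap.flip_apply]
    rw [← he, hW, hγ, one_smul, he, hact_one]

lemma apply_one_eq_act_flip_one [One G] (hact_one : ∀ a, act 1 a = a)
    (hspan : Submodule.span k {x | ∃ g l, j g l = x} = ⊤) (hj_one : (1 : H) ∈ LinearMap.range (j 1))
    (hW : ∀ g s x y, W (j g x) (j s y) = γ g s • act (j g x) (act (j s y) 1))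
    (hγ : ∀ g, γ 1 g = 1) : W 1 = act.flip 1 :=
  LinearMap.ext_on hspan <| by
    rintro _ ⟨g, x, rfl⟩
    obtain ⟨e, he⟩ := hj_one
    rw [← he, hW, hγ, one_smul, he, hact_one]
    rfl

lemma actTensor_lift_mul_liftTensorMul_eq [Mul G] [CoalgebraStruct k L]
    (hmul : ActsMultiplicatively act) (hpartial : ActsPartially act)
    (hspan : Submodule.span k {x | ∃ g l, j g l = x} = ⊤)
    (hj : ∀ g, comul ∘ₗ j g = map (j g) (j g) ∘ₗ comul)
    (hj_mul : ∀ g s x y, j g x * j s y ∈ LinearMap.range (j (g * s)))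
    (hW : ∀ g s x y, W (j g x) (j s y) = γ g s • act (j g x) (act (j s y) 1))
    (hγ : ∀ g s t, γ g s * γ (g * s) t = γ g (s * t) * γ s t) :
    actTensor act (toConv (lift W)) * liftTensorMul W = liftTensorCounit W * liftMulTensor W := by
  refine WithConv.ext_of_precomp_map₃ hspan fun g s t => ?_
  set J := map (j g) (map (j s) (j t))
  have hJ : comul ∘ₗ J = map J J ∘ₗ comul :=
    LinearMap.comul_comp_map (hj g) (LinearMap.comul_comp_map (hj s) (hj t))
  have hX : precomp J (actTensor act (toConv (lift W))) =
      γ s t • precomp J (actTensor act (iterAct act 1)) :=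
    WithConv.ext <| TensorProduct.ext_threefold' fun x y z => by simp [J, hW]
  have hY : precomp J (liftTensorMul W) = γ g (s * t) • precomp J (actTensor act (mulAct act 1)) :=
    WithConv.ext <| TensorProduct.ext_threefold' fun x y z => by
      obtain ⟨w, hw⟩ := hj_mul s t y z
      simp [J, ← hw, hW]
  have hZ : precomp J (liftTensorCounit W) =
      γ g s • precomp J (liftTensorCounit (act.compl₂ (act.flip 1))) :=
    WithConv.ext <| TensorProduct.ext_threefold' fun x y z => by
      simp [J, hW, smul_comm (counit (R := k) _)]
  have hV : precomp J (liftMulTensor W) =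
      γ (g * s) t • precomp J (liftMulTensor (act.compl₂ (act.flip 1))) :=
    WithConv.ext <| TensorProduct.ext_threefold' fun x y z => by
      obtain ⟨w, hw⟩ := hj_mul g s x y
      simp [J, ← hw, hW]
  rw [precomp_mul hJ, precomp_mul hJ, hX, hY, hZ, hV, smul_mul_smul_comm, smul_mul_smul_comm,
    ← precomp_mul hJ, ← precomp_mul hJ, ← actTensor_mul hmul,
    ← iterAct_eq_iterAct_one_mul_mulAct hmul hpartial,
    liftTensorCounit_mul_liftMulTensor_eq hmul hpartial, hγ, mul_comm]

end GroupTwist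

theorem smashProduct_groupCocycle_twists
    {k : Type} [Field k] {L : Type} [Ring L] [HopfAlgebra k L]
    {G : Type} [Group G]
    (φ : G →* (L →ₐ[k] L))
    {H : Type} [Ring H] [HopfAlgebra k H]
    (j : G → L →ₗ[k] H)
    (hspan : Submodule.span k {x : H | ∃ g l, j g l = x} = ⊤)
    (hj_one : j 1 1 = 1)
    (hj_mul : ∀ (g s : G) (l l' : L), (j g l) * (j s l') = j (g * s) (l * φ g l'))
    (hj_comul : ∀ (g : G) (l : L) (ι : Type) (s : Finset ι) (l1 l2 : ι → L),
      Coalgebra.comul (R := k) l = ∑ i ∈ s, l1 i ⊗ₜ[k] l2 i →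
      Coalgebra.comul (R := k) (j g l) = ∑ i ∈ s, (j g (l1 i)) ⊗ₜ[k] (j g (l2 i)))
    {A : Type} [Ring A] [Algebra k A]
    (act : H →ₗ[k] A →ₗ[k] A)
    (hact_one : ∀ a : A, act 1 a = a)
    (hact_mul : ∀ (h : H) (a b : A) (ι : Type) (s : Finset ι) (h1 h2 : ι → H),
      Coalgebra.comul (R := k) h = ∑ i ∈ s, h1 i ⊗ₜ[k] h2 i →
      act h (a * b) = ∑ i ∈ s, act (h1 i) a * act (h2 i) b)
    (hact_partial : ∀ (h l : H) (a : A) (ι : Type) (s : Finset ι)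
      (h1 h2 : ι → H),
      Coalgebra.comul (R := k) h = ∑ i ∈ s, h1 i ⊗ₜ[k] h2 i →
      act h (act l a) = ∑ i ∈ s, act (h1 i) 1 * act (h2 i * l) a)
    (γ : G → G → kˣ)
    (hγ_cocycle : ∀ x y z : G, γ x y * γ (x * y) z = γ x (y * z) * γ y z)
    (hγ_norm₁ : ∀ g : G, γ g 1 = 1) (hγ_norm₂ : ∀ g : G, γ 1 g = 1)
    (W : H →ₗ[k] H →ₗ[k] A)
    (hW : ∀ (g s : G) (l l' : L),
      W (j g l) (j s l') = (γ g s : k) • act (j g l) (act (j s l') 1)) :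
    -- the pair `(act, W)` is a twisted partial action …
    ((∀ (h l : H) (a : A) (ι κ : Type) (s : Finset ι) (t : Finset κ)
        (h1 h2 : ι → H) (l1 l2 : κ → H),
        Coalgebra.comul (R := k) h = ∑ i ∈ s, h1 i ⊗ₜ[k] h2 i →
        Coalgebra.comul (R := k) l = ∑ j ∈ t, l1 j ⊗ₜ[k] l2 j →
        ∑ i ∈ s, ∑ j ∈ t, act (h1 i) (act (l1 j) a) * W (h2 i) (l2 j) =
          ∑ i ∈ s, ∑ j ∈ t, W (h1 i) (l1 j) * act (h2 i * l2 j) a) ∧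
      (∀ (h l : H) (ι κ : Type) (s : Finset ι) (t : Finset κ)
        (h1 h2 : ι → H) (l1 l2 : κ → H),
        Coalgebra.comul (R := k) h = ∑ i ∈ s, h1 i ⊗ₜ[k] h2 i →
        Coalgebra.comul (R := k) l = ∑ j ∈ t, l1 j ⊗ₜ[k] l2 j →
        W h l = ∑ i ∈ s, ∑ j ∈ t, W (h1 i) (l1 j) * act (h2 i * l2 j) 1)) ∧
    -- … satisfying the normalization (8) …
    (∀ h : H, W h 1 = act h 1 ∧ W 1 h = act h 1) ∧
    -- … and the cocycle identity (9)
    (∀ (h l m : H) (ι κ ν : Type) (s : Finset ι) (t : Finset κ)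
      (r : Finset ν) (h1 h2 : ι → H) (l1 l2 : κ → H) (m1 m2 : ν → H),
      Coalgebra.comul (R := k) h = ∑ i ∈ s, h1 i ⊗ₜ[k] h2 i →
      Coalgebra.comul (R := k) l = ∑ j ∈ t, l1 j ⊗ₜ[k] l2 j →
      Coalgebra.comul (R := k) m = ∑ p ∈ r, m1 p ⊗ₜ[k] m2 p →
      ∑ i ∈ s, ∑ j ∈ t, ∑ p ∈ r,
          act (h1 i) (W (l1 j) (m1 p)) * W (h2 i) (l2 j * m2 p) =
        ∑ i ∈ s, ∑ j ∈ t, W (h1 i) (l1 j) * W (h2 i * l2 j) m) := by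
  have hj : ∀ g, comul ∘ₗ j g = map (j g) (j g) ∘ₗ comul := fun g => LinearMap.ext fun x => by
    rw [LinearMap.comp_apply, hj_comul g x _ _ _ _ (ℛ k x).eq.symm, LinearMap.comp_apply,
      ← (ℛ k x).eq, map_sum]
    rfl
  have hmul : ActsMultiplicatively act := fun a b => WithConv.ext <| LinearMap.ext fun h => by
    rw [(ℛ k h).convMul_apply]
    exact hact_mul h a b _ _ _ _ (ℛ k h).eq.symm
  have hpartial : ActsPartially act := fun a => WithConv.ext <| TensorProduct.ext' fun h l => by
    rw [actTensor_one_mul_mulAct_tmul (ℛ k h)]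
    exact hact_partial h l a _ _ _ _ (ℛ k h).eq.symm
  refine ⟨⟨fun h l a ι κ s t h1 h2 l1 l2 hh hl => ?_, fun h l ι κ s t h1 h2 l1 l2 hh hl => ?_⟩,
    fun h => ⟨?_, ?_⟩, fun h l m ι κ ν s t r h1 h2 l1 l2 m1 m2 hh hl hm => ?_⟩
  · have := congr($(iterAct_mul_lift_eq_lift_mul_mulAct hmul hpartial hspan hj hW a) (h ⊗ₜ l))
    simpa [Repr.convMul_tmul_apply ⟨s, h1, h2, hh.symm⟩ ⟨t, l1, l2, hl.symm⟩] using this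
  · have := congr($(lift_eq_lift_mul_mulAct_one hmul hpartial hspan hj hW) (h ⊗ₜ l))
    simpa [Repr.convMul_tmul_apply ⟨s, h1, h2, hh.symm⟩ ⟨t, l1, l2, hl.symm⟩] using this
  · exact congr($(flip_one_eq_act_flip_one hact_one hspan ⟨1, hj_one⟩ hW
      (by simp [hγ_norm₁])) h)
  · exact congr($(apply_one_eq_act_flip_one hact_one hspan ⟨1, hj_one⟩ hW
      (by simp [hγ_norm₂])) h)
  · have := congr($(actTensor_lift_mul_liftTensorMul_eq hmul hpartial hspan hj
      (fun g s x y => ⟨_, (hj_mul g s x y).symm⟩) hW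
      (fun g s t => by exact_mod_cast congr_arg Units.val (hγ_cocycle g s t))) (h ⊗ₜ (l ⊗ₜ m)))
    rw [Repr.convMul_tmul_apply ⟨s, h1, h2, hh.symm⟩
        ((⟨t, l1, l2, hl.symm⟩ : Repr k l κ).tmul ⟨r, m1, m2, hm.symm⟩),
      liftTensorCounit_mul_liftMulTensor_tmul W W ⟨s, h1, h2, hh.symm⟩ ⟨t, l1, l2, hl.symm⟩]
      at this
    simpa [Finset.sum_product] using this
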